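/- arXiv:0708.3423 — 2 statements merged into one kernel-verified Lean document; each statement's English description precedes it below -/
import Mathlib

section
/- Let 1 < p < 2, let (Ω, μ) be a probability space and write L_p = L_p(Ω, μ) and L_2 = L_2(Ω, μ) (complex scalars). Let (T(z)) be a holomorphic semigroup on L_p, i.e. z ↦ T(z) is an analytic map from an open sector S_α = {z ∈ ℂ : z ≠ 0, |arg z| < α} (for some 0 < α ≤ π/2) into the bounded operators B(L_p), satisfying T(z)T(w) = T(z+w) for all z, w ∈ S_α, and sup{‖T(z)‖ : z ∈ S_β, |z| ≤ R} < ∞ for every 0 < β < α and R > 0. Assume that for some s > 0 the operator T(s) is bounded from L_p to L_2, i.e. there is c₀ > 0 such that for every f ∈ L_p the function T(s)f belongs to L_2 and ‖T(s)f‖_2 ≤ c₀‖f‖_p. Then for every t > 0 there exist constants c > 0 and d ∈ ℝ such that for every ε > 0 there is an operator T' ∈ B(L_p) with ‖T(t) − T'‖_{B(L_p)} ≤ ε, such that T' maps L_p into L_2 and ‖T' : L_p → L_2‖ ≤ c·ε^d. In particular, for every t > 0, T(t) lies in the norm closure in B(L_p) of the set Γ₂ of operators on L_p that map L_p boundedly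 into L_2. -/
/-!
Call `a` approximable at polynomial rate by a class `Γ` if for every `ε > 0` some `b ∈ Γ` with
constant `O(ε^d)` satisfies `‖a - b‖ ≤ ε`. This holds for `T(s)` trivially, and it propagates from
`T(u)` to `T(t)` whenever `t > (1 - k) u`, where `B(x, k x)` lies in the sector for all `x > 0`:
expand `T` at a point `t₀ > max t u` whose disc of analyticity contains `t`. The partial sums
`P_N(t - t₀)` approach `T(t)` geometrically, and since `T(z) = T(u) T(z - u)` near `t₀` they factor
as `T(u) S_N` with `‖S_N‖` growing at most geometrically. Replacing `T(u)` by a good approximant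
`A ∈ Γ` gives `A S_N ∈ Γ`, and taking `N ≈ log(1/ε)` keeps its constant polynomial in `1/ε`.
Iterating the step reaches every `t > 0`.
-/

open MeasureTheory Complex ENNReal

/-- `Γ b C` reads: `b` belongs to the class `Γ` with constant `C`. -/
def ApproxAtPolyRate {𝓐 : Type*} [SeminormedAddCommGroup 𝓐] (Γ : 𝓐 → ℝ → Prop) (a : 𝓐) :
    Prop :=
  ∃ c > (0 : ℝ), ∃ d ≤ (0 : ℝ), ∀ ε > (0 : ℝ), ∃ b, ‖a - b‖ ≤ ε ∧ Γ b (c * ε ^ d)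

def IsRightIdealWithBound {𝓐 : Type*} [NonUnitalSeminormedRing 𝓐] (Γ : 𝓐 → ℝ → Prop) : Prop :=
  ∀ b r C C', Γ b C → 0 ≤ C → C * ‖r‖ ≤ C' → Γ (b * r) C'

theorem approxAtPolyRate_of_bound {𝓐 : Type*} [SeminormedAddCommGroup 𝓐]
    {Γ : 𝓐 → ℝ → Prop} {a : 𝓐} {C : ℝ} (ha : Γ a C) (hC : 0 < C) : ApproxAtPolyRate Γ a :=
  ⟨C, hC, 0, le_rfl, fun ε hε => ⟨a, by simpa using hε.le, by simpa using ha⟩⟩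

theorem ApproxAtPolyRate.mem_closure {𝓐 : Type*} [SeminormedAddCommGroup 𝓐]
    {Γ : 𝓐 → ℝ → Prop} {a : 𝓐} (ha : ApproxAtPolyRate Γ a) :
    a ∈ closure {b | ∃ C, Γ b C} := by
  obtain ⟨c, -, d, -, ha⟩ := ha
  refine Metric.mem_closure_iff.2 fun ε hε => ?_
  obtain ⟨b, hab, hb⟩ := ha (ε / 2) (by positivity)
  exact ⟨b, ⟨_, hb⟩, by rw [dist_eq_norm]; linarith⟩

theorem exists_pow_le_and_pow_le_mul_rpow {a B K : ℝ} (ha0 : 0 < a) (ha1 : a < 1) (hB : 1 ≤ B)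
    (hK : 0 < K) :
    ∃ L > 0, ∃ κ ≤ (0 : ℝ), ∀ ε > 0, ∃ N : ℕ, K * a ^ N ≤ ε ∧ (N = 0 ∨ B ^ N ≤ L * ε ^ κ) := by
  set κ := Real.log B / Real.log a
  have hlog : Real.log a < 0 := Real.log_neg ha0 ha1
  have haκ : a ^ κ = B := by
    rw [Real.rpow_def_of_pos ha0, mul_div_cancel₀ _ hlog.ne, Real.exp_log (by linarith)]
  have hκ : κ ≤ 0 := div_nonpos_of_nonneg_of_nonpos (Real.log_nonneg hB) hlog.le
  refine ⟨B * K ^ (-κ), by positivity, κ, hκ, fun ε hε => ?_⟩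
  have hex : ∃ n : ℕ, K * a ^ n ≤ ε := by
    obtain ⟨n, hn⟩ := exists_pow_lt_of_lt_one (div_pos hε hK) ha1
    exact ⟨n, ((lt_div_iff₀' hK).1 hn).le⟩
  refine ⟨Nat.find hex, Nat.find_spec hex, ?_⟩
  cases hN : Nat.find hex with
  | zero => exact Or.inl rfl
  | succ n =>
    have hn : ε / K < a ^ n := (div_lt_iff₀' hK).2 (not_le.1 (Nat.find_min hex (by omega)))
    refine Or.inr ?_
    calc B ^ (n + 1) = B * (a ^ n) ^ κ := by
          rw [pow_succ', ← haκ, Real.rpow_pow_comm ha0.le]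
      _ ≤ B * (ε / K) ^ κ := by
          gcongr B * ?_
          exact Real.rpow_le_rpow_of_nonpos (by positivity) hn.le hκ
      _ = B * K ^ (-κ) * ε ^ κ := by
          rw [Real.div_rpow hε.le hK.le, Real.rpow_neg hK.le]; ring

theorem ApproxAtPolyRate.of_norm_sub_mul_le {𝓐 : Type*} [NonUnitalSeminormedRing 𝓐]
    {Γ : 𝓐 → ℝ → Prop} (hΓ : IsRightIdealWithBound Γ) {u x : 𝓐} (hu : ApproxAtPolyRate Γ u)
    {s : ℕ → 𝓐} (hs0 : s 0 = 0) {M B : ℝ} (hM : 0 < M) (hB : 1 ≤ B)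
    (hs : ∀ N, ‖s N‖ ≤ M * B ^ N) {K a : ℝ} (hK : 0 < K) (ha0 : 0 < a) (ha1 : a < 1)
    (hx : ∀ N, ‖x - u * s N‖ ≤ K * a ^ N) : ApproxAtPolyRate Γ x := by
  obtain ⟨c, hc, d, hd, hu⟩ := hu
  obtain ⟨L, hL, κ, hκ, hN⟩ :=
    exists_pow_le_and_pow_le_mul_rpow ha0 ha1 hB (by positivity : 0 < 2 * K)
  refine ⟨c * M / (2 * M) ^ d * L ^ (1 - d), by positivity, d + κ * (1 - d), by nlinarith,
    fun ε hε => ?_⟩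
  obtain ⟨N, hKN, hBN⟩ := hN ε hε
  have hX : 0 < B ^ N := by positivity
  -- `u` is approximated to within `ε'`, so that the error `ε' * ‖s N‖` is at most `ε / 2`
  set ε' := ε / (2 * M * B ^ N)
  obtain ⟨b, hub, hb⟩ := hu ε' (by positivity)
  refine ⟨b * s N, ?_, hΓ _ _ _ _ hb (by positivity) ?_⟩
  · have hε' : ε' * (M * B ^ N) = ε / 2 := by simp only [ε']; field_simp
    calc ‖x - b * s N‖ = ‖(x - u * s N) + (u - b) * s N‖ := by rw [sub_mul]; abel_nf
      _ ≤ K * a ^ N + ε' * (M * B ^ N) := norm_add_le_of_le (hx N) (norm_mul_le_of_le hub (hs N))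
      _ ≤ ε := by linarith
  · rcases hBN with rfl | hBN
    · rw [hs0, norm_zero, mul_zero]; positivity
    calc c * ε' ^ d * ‖s N‖ ≤ c * ε' ^ d * (M * B ^ N) := by gcongr; exact hs N
      _ = c * M / (2 * M) ^ d * (ε ^ d * (B ^ N) ^ (1 - d)) := by
          rw [Real.div_rpow hε.le (by positivity), Real.mul_rpow (by positivity) hX.le,
            Real.rpow_sub hX, Real.rpow_one]
          field_simp
      _ ≤ c * M / (2 * M) ^ d * (ε ^ d * (L * ε ^ κ) ^ (1 - d)) := by
          gcongr; linarith
      _ = c * M / (2 * M) ^ d * L ^ (1 - d) * ε ^ (d + κ * (1 - d)) := by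
          rw [Real.mul_rpow hL.le (by positivity), ← Real.rpow_mul hε.le, Real.rpow_add hε]; ring

theorem FormalMultilinearSeries.exists_norm_partialSum_le {𝕜 E F : Type*}
    [NontriviallyNormedField 𝕜] [NormedAddCommGroup E] [NormedSpace 𝕜 E] [NormedAddCommGroup F]
    [NormedSpace 𝕜 F] (Q : FormalMultilinearSeries 𝕜 E F) (hQ : 0 < Q.radius) (y : E) :
    ∃ M > (0 : ℝ), ∃ B ≥ (1 : ℝ), ∀ N, ‖Q.partialSum N y‖ ≤ M * B ^ N := by
  obtain ⟨ρ, hρ0, hρ⟩ := ENNReal.lt_iff_exists_nnreal_btwn.1 hQ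
  have hρ0 : (0 : ℝ) < ρ := by exact_mod_cast hρ0
  obtain ⟨M, hM, hQM⟩ := Q.norm_mul_pow_le_of_lt_radius hρ
  set b := max 1 (‖y‖ / ρ)
  have hb : 1 ≤ b := le_max_left _ _
  refine ⟨M, hM, 2 * b, by linarith, fun N => ?_⟩
  have hterm : ∀ n ∈ Finset.range N, ‖Q n (fun _ => y)‖ ≤ M * b ^ N := fun n hn =>
    calc ‖Q n (fun _ => y)‖ ≤ ‖Q n‖ * ‖y‖ ^ n := (Q n).le_opNorm_mul_pow_of_le (pi_norm_const_le y)
      _ = ‖Q n‖ * ρ ^ n * (‖y‖ / ρ) ^ n := by rw [div_pow]; field_simp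
      _ ≤ M * b ^ N := mul_le_mul (hQM n)
          ((pow_le_pow_left₀ (by positivity) (le_max_right _ _) n).trans
            (pow_le_pow_right₀ hb (Finset.mem_range.1 hn).le)) (by positivity) hM.le
  calc ‖Q.partialSum N y‖ ≤ ∑ n ∈ Finset.range N, ‖Q n (fun _ => y)‖ := norm_sum_le _ _
    _ ≤ N * (M * b ^ N) := by simpa using Finset.sum_le_card_nsmul _ _ _ hterm
    _ ≤ 2 ^ N * (M * b ^ N) := by gcongr; exact_mod_cast Nat.lt_two_pow_self.le
    _ = M * (2 * b) ^ N := by ring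

open Topology in
theorem ApproxAtPolyRate.of_hasFPowerSeriesOnBall {𝕜 𝓐 : Type*} [NontriviallyNormedField 𝕜]
    [NormedRing 𝓐] [NormedAlgebra 𝕜 𝓐] {Γ : 𝓐 → ℝ → Prop} (hΓ : IsRightIdealWithBound Γ)
    {f g : 𝕜 → 𝓐} {P : FormalMultilinearSeries 𝕜 𝕜 𝓐} {z₀ : 𝕜} {r : ℝ≥0∞} {u : 𝓐}
    (hf : HasFPowerSeriesOnBall f P z₀ r) (hg : AnalyticAt 𝕜 g z₀)
    (hfg : f =ᶠ[𝓝 z₀] fun z => u * g z) (hu : ApproxAtPolyRate Γ u) {y : 𝕜} (hy : ‖y‖ₑ < r) :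
    ApproxAtPolyRate Γ (f (z₀ + y)) := by
  obtain ⟨Q, ρ, hQ⟩ := hg
  have hPQ : P = (ContinuousLinearMap.mul 𝕜 𝓐 u).compFormalMultilinearSeries Q :=
    hf.hasFPowerSeriesAt.eq_formalMultilinearSeries_of_eventually
      (ContinuousLinearMap.comp_hasFPowerSeriesOnBall _ hQ).hasFPowerSeriesAt hfg
  have hpartialSum : ∀ N, P.partialSum N y = u * Q.partialSum N y := fun N => by
    simp [hPQ, FormalMultilinearSeries.partialSum, Finset.mul_sum]
  obtain ⟨r', hyr', hr'⟩ := ENNReal.lt_iff_exists_nnreal_btwn.1 hy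
  obtain ⟨a, ⟨ha0, ha1⟩, K, hK, happrox⟩ := hf.uniform_geometric_approx hr'
  obtain ⟨M, hM, B, hB, hQB⟩ := Q.exists_norm_partialSum_le hQ.radius_pos y
  refine hu.of_norm_sub_mul_le hΓ (by simp [FormalMultilinearSeries.partialSum]) hM hB hQB hK
    ha0 ha1 fun N => ?_
  rw [← hpartialSum]
  exact happrox y (mem_ball_zero_iff.2 (by exact_mod_cast hyr')) N

theorem forall_pos_of_lt_mul {A : ℝ → Prop} {q s : ℝ} (hq0 : 0 ≤ q) (hq1 : q < 1) (hs : 0 < s)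
    (hAs : A s) (hA : ∀ u > 0, A u → ∀ t > 0, q * u < t → A t) : ∀ t > 0, A t := by
  obtain ⟨r, hqr, hr1⟩ := exists_between hq1
  have hr0 : 0 < r := by linarith
  have hpow : ∀ n : ℕ, A (r ^ n * s) := by
    intro n
    induction n with
    | zero => simpa using hAs
    | succ n ih =>
      refine hA _ (by positivity) ih _ (by positivity) ?_
      rw [pow_succ', mul_assoc]
      exact mul_lt_mul_of_pos_right hqr (by positivity)
  intro t ht
  obtain ⟨n, hn⟩ := exists_pow_lt_of_lt_one (div_pos ht hs) hr1
  refine hA _ (by positivity) (hpow n) t ht ?_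
  calc q * (r ^ n * s) < 1 * (r ^ n * s) := mul_lt_mul_of_pos_right hq1 (by positivity)
    _ < t := by rw [one_mul, ← lt_div_iff₀ hs]; exact hn

namespace Complex

def sector (α : ℝ) : Set ℂ := {z : ℂ | z ≠ 0 ∧ |z.arg| < α}

open Topology Filter in
theorem exists_ball_subset_sector {α : ℝ} (hα : 0 < α) :
    ∃ k > (0 : ℝ), k < 1 ∧ ∀ x : ℝ, 0 < x → Metric.ball (x : ℂ) (k * x) ⊆ sector α := by
  have h1 : sector α ∈ 𝓝 (1 : ℂ) := by
    have harg : ∀ᶠ z in 𝓝 (1 : ℂ), |z.arg| < α :=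
      (continuous_abs.continuousAt.comp (continuousAt_arg one_mem_slitPlane)).eventually_lt
        continuousAt_const (by simpa using hα)
    exact (eventually_ne_nhds one_ne_zero).and harg
  obtain ⟨k, hk, hball⟩ := Metric.mem_nhds_iff.1 h1
  refine ⟨min k (1 / 2), by positivity, by linarith [min_le_right k (1 / 2)], fun x hx z hz => ?_⟩
  have hx' : (x : ℂ) ≠ 0 := ofReal_ne_zero.2 hx.ne'
  have hzx : z / x ∈ sector α := by
    refine hball (lt_of_lt_of_le ?_ (min_le_left k (1 / 2)))
    rw [Metric.mem_ball, dist_eq_norm] at hz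
    rw [dist_eq_norm, div_sub_one hx', norm_div, norm_real, Real.norm_of_nonneg hx.le,
      div_lt_iff₀ hx]
    exact hz
  have hz : z = (x : ℂ) * (z / x) := by field_simp
  rw [hz]
  exact ⟨mul_ne_zero hx' hzx.1, by rw [arg_real_mul _ hx]; exact hzx.2⟩

end Complex

section Semigroup

variable {𝓐 : Type*} [NormedRing 𝓐] [NormedAlgebra ℂ 𝓐] [CompleteSpace 𝓐]
  {Γ : 𝓐 → ℝ → Prop} {T : ℂ → 𝓐} {α : ℝ}

open Topology Filter in
theorem exists_approxAtPolyRate_of_lt_mul (hΓ : IsRightIdealWithBound Γ) (hα : 0 < α)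
    (hT : AnalyticOnNhd ℂ T (sector α))
    (hTmul : ∀ z ∈ sector α, ∀ w ∈ sector α, T z * T w = T (z + w)) :
    ∃ q, 0 ≤ q ∧ q < 1 ∧
      ∀ u : ℝ, 0 < u → ApproxAtPolyRate Γ (T u) →
        ∀ t : ℝ, 0 < t → q * u < t → ApproxAtPolyRate Γ (T t) := by
  obtain ⟨k, hk0, hk1, hball⟩ := exists_ball_subset_sector hα
  have hmem : ∀ x : ℝ, 0 < x → (x : ℂ) ∈ sector α := fun x hx =>
    hball x hx (Metric.mem_ball_self (by positivity))
  refine ⟨1 - k, by linarith, by linarith, fun u hu hTu t ht htu => ?_⟩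
  have h1k : 0 < 1 - k := by linarith
  obtain ⟨t₀, ht₀, ht₀'⟩ : ∃ t₀, max t u < t₀ ∧ t₀ < t / (1 - k) :=
    exists_between (max_lt ((lt_div_iff₀ h1k).2 (by nlinarith)) ((lt_div_iff₀' h1k).2 htu))
  obtain ⟨htt₀, hut₀⟩ := max_lt_iff.1 ht₀
  have hdist : t₀ - t < k * t₀ := by linarith [(lt_div_iff₀ h1k).1 ht₀']
  obtain ⟨r, hr, hrk⟩ := exists_between hdist
  have hr0 : 0 < r := by linarith
  let R : NNReal := ⟨r, hr0.le⟩
  have hP := DifferentiableOn.hasFPowerSeriesOnBall (R := R) (c := t₀) (f := T)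
    (fun z hz => (hT z (hball t₀ (by linarith)
      (Metric.closedBall_subset_ball hrk hz))).differentiableAt.differentiableWithinAt)
    (by exact_mod_cast hr0)
  have hy : ‖(t : ℂ) - t₀‖ₑ < R := by
    rw [enorm_eq_nnnorm, ENNReal.coe_lt_coe, ← NNReal.coe_lt_coe, coe_nnnorm,
      ← Complex.ofReal_sub, norm_real, Real.norm_of_nonpos (by linarith)]
    show -(t - t₀) < r
    linarith
  have hG : AnalyticAt ℂ (fun z => T (z - u)) t₀ :=
    (hT _ (by exact_mod_cast hmem (t₀ - u) (by linarith))).comp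
      (analyticAt_id.sub analyticAt_const)
  have hTG : T =ᶠ[𝓝 (t₀ : ℂ)] fun z => T u * T (z - u) := by
    filter_upwards [Metric.ball_mem_nhds (t₀ : ℂ) (by nlinarith : 0 < k * (t₀ - u))] with z hz
    have hzu : z - u ∈ sector α := hball (t₀ - u) (by linarith) (by
      rw [Metric.mem_ball, dist_eq_norm] at hz ⊢; push_cast; rwa [sub_sub_sub_cancel_right])
    rw [hTmul _ (hmem u hu) _ hzu, add_sub_cancel]
  simpa using hTu.of_hasFPowerSeriesOnBall hΓ hP hG hTG hy

theorem ApproxAtPolyRate.of_semigroup (hΓ : IsRightIdealWithBound Γ) (hα : 0 < α)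
    (hT : AnalyticOnNhd ℂ T (sector α))
    (hTmul : ∀ z ∈ sector α, ∀ w ∈ sector α, T z * T w = T (z + w)) {s : ℝ} (hs : 0 < s)
    (hTs : ApproxAtPolyRate Γ (T s)) {t : ℝ} (ht : 0 < t) : ApproxAtPolyRate Γ (T t) :=
  have ⟨_, hq0, hq1, hstep⟩ := exists_approxAtPolyRate_of_lt_mul hΓ hα hT hTmul
  forall_pos_of_lt_mul (A := fun u : ℝ => ApproxAtPolyRate Γ (T u)) hq0 hq1 hs hTs hstep t ht

end Semigroup

section Lp

variable {X 𝕜 E F : Type*} [MeasurableSpace X] {μ : Measure X} [NontriviallyNormedField 𝕜]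
  [NormedAddCommGroup E] [NormedSpace 𝕜 E] [NormedAddCommGroup F] [NormedSpace 𝕜 F]
  {p : ℝ≥0∞} [Fact (1 ≤ p)]

def BoundedIntoLp (q : ℝ≥0∞) (S : F →L[𝕜] Lp E p μ) (C : ℝ) : Prop :=
  ∀ f, MemLp (S f) q μ ∧ eLpNorm (S f) q μ ≤ ENNReal.ofReal (C * ‖f‖)

theorem BoundedIntoLp.comp {q : ℝ≥0∞} {S : F →L[𝕜] Lp E p μ} {R : F →L[𝕜] F} {C C' : ℝ}
    (hS : BoundedIntoLp q S C) (hC : 0 ≤ C) (hR : C * ‖R‖ ≤ C') :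
    BoundedIntoLp q (S ∘L R) C' := fun f => by
  refine ⟨(hS (R f)).1, (hS (R f)).2.trans (ENNReal.ofReal_le_ofReal ?_)⟩
  calc C * ‖R f‖ ≤ C * (‖R‖ * ‖f‖) := mul_le_mul_of_nonneg_left (R.le_opNorm f) hC
    _ = C * ‖R‖ * ‖f‖ := (mul_assoc ..).symm
    _ ≤ C' * ‖f‖ := mul_le_mul_of_nonneg_right hR (norm_nonneg f)

end Lp

theorem pisier_hypercontractive_semigroup_general
    {Ω : Type*} [MeasurableSpace Ω] (μ : Measure Ω)
    (p : ℝ≥0∞) [Fact (1 ≤ p)]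
    (α : ℝ) (hα0 : 0 < α)
    (T : ℂ → (Lp ℂ p μ →L[ℂ] Lp ℂ p μ))
    (hanal : AnalyticOnNhd ℂ T {z : ℂ | z ≠ 0 ∧ |z.arg| < α})
    (hsemi : ∀ z ∈ {z : ℂ | z ≠ 0 ∧ |z.arg| < α}, ∀ w ∈ {z : ℂ | z ≠ 0 ∧ |z.arg| < α},
      T z ∘L T w = T (z + w))
    (s : ℝ) (hs : 0 < s) (c₀ : ℝ) (hc₀ : 0 < c₀)
    (hhyp : ∀ f : Lp ℂ p μ, MemLp (⇑(T (s : ℂ) f)) 2 μ ∧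
      eLpNorm (⇑(T (s : ℂ) f)) 2 μ ≤ ENNReal.ofReal (c₀ * ‖f‖)) :
    ∀ t : ℝ, 0 < t →
      (∃ c > (0 : ℝ), ∃ d : ℝ, ∀ ε > (0 : ℝ),
        ∃ T' : Lp ℂ p μ →L[ℂ] Lp ℂ p μ,
          ‖T (t : ℂ) - T'‖ ≤ ε ∧
          ∀ f : Lp ℂ p μ, MemLp (⇑(T' f)) 2 μ ∧
            eLpNorm (⇑(T' f)) 2 μ ≤ ENNReal.ofReal (c * ε ^ d * ‖f‖)) ∧
      T (t : ℂ) ∈ closure {S : Lp ℂ p μ →L[ℂ] Lp ℂ p μ |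
        ∃ C : ℝ, ∀ f : Lp ℂ p μ, MemLp (⇑(S f)) 2 μ ∧
          eLpNorm (⇑(S f)) 2 μ ≤ ENNReal.ofReal (C * ‖f‖)} := by
  intro t ht
  have hTt : ApproxAtPolyRate (BoundedIntoLp 2) (T t) :=
    (approxAtPolyRate_of_bound hhyp hc₀).of_semigroup (fun _ _ _ _ hb hC hR => hb.comp hC hR)
      hα0 hanal hsemi hs ht
  refine ⟨?_, hTt.mem_closure⟩
  obtain ⟨c, hc, d, -, hcd⟩ := hTt
  exact ⟨c, hc, d, hcd⟩

/-- Pisier's theorem (Theorem 1): a holomorphic semigroup on `L_p` of a probability space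
(`1 < p < 2`) which is hypercontractive (`T(s)` bounded from `L_p` to `L_2` for some `s > 0`)
satisfies: every `T(t)`, `t > 0`, can be approximated in operator norm, with quantitative
control, by operators mapping `L_p` boundedly into `L_2`; in particular `T(t)` lies in the
norm closure of the set `Γ₂` of such operators. -/
theorem pisier_hypercontractive_semigroup
    {Ω : Type*} [MeasurableSpace Ω] (μ : Measure Ω) [IsProbabilityMeasure μ]
    (p : ℝ≥0∞) (hp1 : 1 < p) (hp2 : p < 2) [Fact (1 ≤ p)]
    (α : ℝ) (hα0 : 0 < α) (hαle : α ≤ Real.pi / 2)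
    (T : ℂ → (Lp ℂ p μ →L[ℂ] Lp ℂ p μ))
    (hanal : AnalyticOnNhd ℂ T {z : ℂ | z ≠ 0 ∧ |z.arg| < α})
    (hsemi : ∀ z ∈ {z : ℂ | z ≠ 0 ∧ |z.arg| < α}, ∀ w ∈ {z : ℂ | z ≠ 0 ∧ |z.arg| < α},
      T z ∘L T w = T (z + w))
    (hbdd : ∀ β R : ℝ, 0 < β → β < α → 0 < R →
      ∃ M : ℝ, ∀ z : ℂ, z ≠ 0 → |z.arg| < β → ‖z‖ ≤ R → ‖T z‖ ≤ M)
    (s : ℝ) (hs : 0 < s) (c₀ : ℝ) (hc₀ : 0 < c₀)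
    (hhyp : ∀ f : Lp ℂ p μ, MemLp (⇑(T (s : ℂ) f)) 2 μ ∧
      eLpNorm (⇑(T (s : ℂ) f)) 2 μ ≤ ENNReal.ofReal (c₀ * ‖f‖)) :
    ∀ t : ℝ, 0 < t →
      (∃ c > (0 : ℝ), ∃ d : ℝ, ∀ ε > (0 : ℝ),
        ∃ T' : Lp ℂ p μ →L[ℂ] Lp ℂ p μ,
          ‖T (t : ℂ) - T'‖ ≤ ε ∧
          ∀ f : Lp ℂ p μ, MemLp (⇑(T' f)) 2 μ ∧
            eLpNorm (⇑(T' f)) 2 μ ≤ ENNReal.ofReal (c * ε ^ d * ‖f‖)) ∧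
      T (t : ℂ) ∈ closure {S : Lp ℂ p μ →L[ℂ] Lp ℂ p μ |
        ∃ C : ℝ, ∀ f : Lp ℂ p μ, MemLp (⇑(S f)) 2 μ ∧
          eLpNorm (⇑(S f)) 2 μ ≤ ENNReal.ofReal (C * ‖f‖)} :=
  pisier_hypercontractive_semigroup_general μ p α hα0 T hanal hsemi s hs c₀ hc₀ hhyp
end

section
/- Let L be a Banach space and let (T(z)) be a holomorphic semigroup in B(L): z ↦ T(z) is analytic from an open sector S_α = {z ∈ ℂ : z ≠ 0, |arg z| < α} (for some 0 < α ≤ π/2) into B(L) and T(z)T(w) = T(z+w) for all z, w ∈ S_α. Let I ⊆ B(L) be a norm-closed linear subspace that is a left ideal, i.e. x∘T ∈ I for every x ∈ B(L) and T ∈ I. If T(s) ∈ I for some s > 0, then T(t) ∈ I for every t > 0. -/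
/-!
Pass to the quotient `B(L) ⧸ I`, a normed space because `I` is closed. Since `I` is a left ideal,
`T(u) = T(u - s) ∘ T(s) ∈ I` for every `u > s`, so the analytic function `z ↦ T(z) + I` vanishes on
the ray `(s, ∞)`. By the identity theorem it then vanishes on the whole (connected) ray `(0, ∞)`.
-/

open Complex Set Filter Topology

theorem ofReal_mem_sector {α u : ℝ} (hα : 0 < α) (hu : 0 < u) :
    (u : ℂ) ∈ {z : ℂ | z ≠ 0 ∧ |z.arg| < α} :=
  ⟨ofReal_ne_zero.2 hu.ne', by rwa [arg_ofReal_of_nonneg hu.le, abs_zero]⟩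

theorem AnalyticOnNhd.eq_zero_of_pos_of_eventually_atTop {E : Type*} [NormedAddCommGroup E]
    [NormedSpace ℂ E] {g : ℂ → E} (hg : AnalyticOnNhd ℂ g (ofReal '' Ioi 0))
    (hzero : ∀ᶠ u : ℝ in atTop, g u = 0) : ∀ t : ℝ, 0 < t → g t = 0 := by
  intro t ht
  obtain ⟨a, ha⟩ := eventually_atTop.1 hzero
  set u₀ := max a 0 + 1
  have hu₀ : 0 < u₀ := by positivity
  have hvanish : ∀ᶠ u : ℝ in 𝓝[≠] u₀, g u = 0 :=
    eventually_nhdsWithin_of_eventually_nhds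
      ((eventually_gt_nhds (by grind : a < u₀)).mono fun u hu ↦ ha u hu.le)
  have hofReal : Tendsto ofReal (𝓝[≠] u₀) (𝓝[≠] (u₀ : ℂ)) :=
    continuous_ofReal.continuousWithinAt.tendsto_nhdsWithin fun _ _ ↦ by simp_all
  exact hg.eqOn_zero_of_preconnected_of_frequently_eq_zero
    (isPreconnected_Ioi.image _ continuous_ofReal.continuousOn) ⟨u₀, hu₀, rfl⟩
    (hofReal.frequently hvanish.frequently) ⟨t, ht, rfl⟩

theorem pisier_semigroup_closed_left_ideal_general
    {L : Type*} [NormedAddCommGroup L] [NormedSpace ℂ L]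
    (α : ℝ) (hα0 : 0 < α)
    (T : ℂ → (L →L[ℂ] L))
    (hanal : AnalyticOnNhd ℂ T {z : ℂ | z ≠ 0 ∧ |z.arg| < α})
    (hsemi : ∀ z ∈ {z : ℂ | z ≠ 0 ∧ |z.arg| < α}, ∀ w ∈ {z : ℂ | z ≠ 0 ∧ |z.arg| < α},
      T z ∘L T w = T (z + w))
    (I : Submodule ℂ (L →L[ℂ] L)) (hIclosed : IsClosed (I : Set (L →L[ℂ] L)))
    (hIdeal : ∀ (x : L →L[ℂ] L), ∀ S ∈ I, x ∘L S ∈ I)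
    (s : ℝ) (hs : 0 < s) (hTs : T (s : ℂ) ∈ I) :
    ∀ t : ℝ, 0 < t → T (t : ℂ) ∈ I := by
  have hmem_of_gt : ∀ u : ℝ, s < u → T u ∈ I := fun u hu ↦ by
    have h := hsemi _ (ofReal_mem_sector hα0 (sub_pos.2 hu)) _ (ofReal_mem_sector hα0 hs)
    rw [← ofReal_add, sub_add_cancel] at h
    exact h ▸ hIdeal _ _ hTs
  have : IsClosed (I : Set (L →L[ℂ] L)) := hIclosed
  have hquot : AnalyticOnNhd ℂ (I.mkQL ∘ T) (ofReal '' Ioi 0) := by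
    rintro _ ⟨u, hu, rfl⟩
    exact (I.mkQL.analyticAt (F := (L →L[ℂ] L) ⧸ I) (T u)).comp
      (hanal _ (ofReal_mem_sector hα0 hu))
  have hquot_zero : ∀ᶠ u : ℝ in atTop, (I.mkQL ∘ T) u = 0 :=
    (eventually_gt_atTop s).mono fun u hu ↦ (Submodule.Quotient.mk_eq_zero I).2 (hmem_of_gt u hu)
  intro t ht
  exact (Submodule.Quotient.mk_eq_zero I).1
    (hquot.eq_zero_of_pos_of_eventually_atTop hquot_zero t ht)

/-- Arendt's remark (Remark 1): if `T(z)` is a holomorphic semigroup on a Banach space `L`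
(analytic on an open sector and satisfying the semigroup law there) and `I` is a norm-closed
left ideal of `B(L)` containing `T(s)` for some `s > 0`, then `T(t) ∈ I` for all `t > 0`. -/
theorem pisier_semigroup_closed_left_ideal
    {L : Type*} [NormedAddCommGroup L] [NormedSpace ℂ L]
    (α : ℝ) (hα0 : 0 < α) (hαle : α ≤ Real.pi / 2)
    (T : ℂ → (L →L[ℂ] L))
    (hanal : AnalyticOnNhd ℂ T {z : ℂ | z ≠ 0 ∧ |z.arg| < α})
    (hsemi : ∀ z ∈ {z : ℂ | z ≠ 0 ∧ |z.arg| < α}, ∀ w ∈ {z : ℂ | z ≠ 0 ∧ |z.arg| < α},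
      T z ∘L T w = T (z + w))
    (I : Submodule ℂ (L →L[ℂ] L)) (hIclosed : IsClosed (I : Set (L →L[ℂ] L)))
    (hIdeal : ∀ (x : L →L[ℂ] L), ∀ S ∈ I, x ∘L S ∈ I)
    (s : ℝ) (hs : 0 < s) (hTs : T (s : ℂ) ∈ I) :
    ∀ t : ℝ, 0 < t → T (t : ℂ) ∈ I :=
  pisier_semigroup_closed_left_ideal_general α hα0 T hanal hsemi I hIclosed hIdeal s hs hTs
end
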